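/- Let N ≥ 2 be an integer, let L > 0 with L ∉ 𝒩, and let λ ∈ ℂ. Suppose φ₁, …, φ_N : ℝ → ℂ each satisfy the KdV spectral ODE with parameter λ on [0,L], with the boundary conditions φ_j(0) = φ₁(0) for all j, Σ_{j=1}^N φ_j''(0) = 0, and φ_j(L) = 0, φ_j'(0) = 0, φ_j'(L) = 0 for all j. Then Σ_{j=1}^N φ_j vanishes identically on [0,L] if and only if every φ_j vanishes identically on [0,L]. -/

import Mathlib

/-!
If `φ''(L) = 0`, then `φ` has zero Cauchy data at `L` and vanishes by uniqueness for the linear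
ODE. Otherwise let `c` be a root of `c³ + c = λ`. Then `g = e^{cx}` (and `g = x e^{cx}` if `c` is a
double root) solves the adjoint equation `g''' + g' = λ g`, so the Lagrange form
`φ'' g - φ' g' + φ (g'' + g)` is constant on `[0, L]`; the four boundary conditions reduce this to
`φ''(0) = φ''(L) e^{cL}` (resp. `φ''(L) L e^{cL} = 0`). Hence the three roots are simple and
`e^{c₁L} = e^{c₂L} = e^{c₃L}`. Writing `(c₁ - c₂) L = 2πim`, `(c₂ - c₃) L = 2πin` and using
`c₁ + c₂ + c₃ = 0`, `c₁c₂ + c₂c₃ + c₃c₁ = 1` gives `3L² = 4π²(m² + mn + n²)`, i.e. `L ∈ 𝒩`.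
For the system, the vanishing sum at `0` forces the common value `φⱼ(0)` to vanish.
-/

/-- A function `φ : ℝ → ℂ` satisfies the KdV spectral ODE with parameter `lam` on `[0, L]`:
it is three times continuously differentiable and `lam·φ + φ' + φ''' = 0` on `[0, L]`. -/
def KdVSpectralODE (lam : ℂ) (L : ℝ) (φ : ℝ → ℂ) : Prop :=
  ContDiff ℝ 3 φ ∧
    ∀ x ∈ Set.Icc (0 : ℝ) L, lam * φ x + deriv φ x + iteratedDeriv 3 φ x = 0

/-- The critical set 𝒩 of Rosier. -/
def criticalN : Set ℝ :=
  {L : ℝ | ∃ k l : ℕ, 0 < k ∧ 0 < l ∧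
    L = (2 * Real.pi / Real.sqrt 3) * Real.sqrt ((k : ℝ) ^ 2 + (k : ℝ) * l + (l : ℝ) ^ 2)}

open Set Complex
open scoped Real

theorem exists_pos_nat_sq_add_mul_add_sq_eq {m n : ℤ} (hm : m ≠ 0) (hn : n ≠ 0)
    (hmn : m + n ≠ 0) :
    ∃ k l : ℕ, 0 < k ∧ 0 < l ∧ (k : ℤ) ^ 2 + k * l + l ^ 2 = m ^ 2 + m * n + n ^ 2 := by
  suffices ∃ k l : ℤ, 0 < k ∧ 0 < l ∧ k ^ 2 + k * l + l ^ 2 = m ^ 2 + m * n + n ^ 2 by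
    obtain ⟨k, l, hk, hl, h⟩ := this
    lift k to ℕ using hk.le
    lift l to ℕ using hl.le
    exact ⟨k, l, by omega, by omega, h⟩
  -- `m ^ 2 + m * n + n ^ 2` is symmetric in `m`, `n`, `-(m + n)`, and two of these share a sign.
  rcases hm.lt_or_gt with hm | hm <;> rcases hn.lt_or_gt with hn | hn <;>
    rcases hmn.lt_or_gt with hmn | hmn <;>
    first
    | omega
    | exact ⟨m, n, hm, hn, rfl⟩
    | exact ⟨-m, -n, by omega, by omega, by ring⟩
    | exact ⟨m + n, -n, by omega, by omega, by ring⟩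
    | exact ⟨m + n, -m, by omega, by omega, by ring⟩
    | exact ⟨-(m + n), m, by omega, by omega, by ring⟩
    | exact ⟨-(m + n), n, by omega, by omega, by ring⟩

theorem mem_criticalN_of_three_mul_sq_eq {L : ℝ} (hL : 0 < L) {k l : ℕ} (hk : 0 < k) (hl : 0 < l)
    (h : 3 * L ^ 2 = 4 * π ^ 2 * (k ^ 2 + k * l + l ^ 2)) : L ∈ criticalN := by
  refine ⟨k, l, hk, hl, (sq_eq_sq₀ hL.le (by positivity)).1 ?_⟩
  rw [mul_pow, div_pow, Real.sq_sqrt (by norm_num), Real.sq_sqrt (by positivity)]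
  linear_combination h / 3

theorem mem_criticalN_of_exp_mul_eq {L : ℝ} (hL : 0 < L) {c₁ c₂ c₃ : ℂ}
    (h₁₂ : c₁ ≠ c₂) (h₂₃ : c₂ ≠ c₃) (h₁₃ : c₁ ≠ c₃)
    (he₁ : c₁ + c₂ + c₃ = 0) (he₂ : c₁ * c₂ + c₂ * c₃ + c₃ * c₁ = 1)
    (hexp₁₂ : exp (c₁ * L) = exp (c₂ * L)) (hexp₂₃ : exp (c₂ * L) = exp (c₃ * L)) :
    L ∈ criticalN := by
  have hL' : (L : ℂ) ≠ 0 := ofReal_ne_zero.2 hL.ne'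
  obtain ⟨m, hm⟩ := exp_eq_exp_iff_exists_int.1 hexp₁₂
  obtain ⟨n, hn⟩ := exp_eq_exp_iff_exists_int.1 hexp₂₃
  have hm0 : m ≠ 0 := by
    rintro rfl
    exact h₁₂ (mul_right_cancel₀ hL' (by simpa using hm))
  have hn0 : n ≠ 0 := by
    rintro rfl
    exact h₂₃ (mul_right_cancel₀ hL' (by simpa using hn))
  have hmn0 : m + n ≠ 0 := by
    intro h
    refine h₁₃ (mul_right_cancel₀ hL' ?_)
    have : ((m : ℂ) + n) = 0 := by exact_mod_cast h
    linear_combination hm + hn + (2 * π * I) * this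
  -- `(c₁ - c₂)² + (c₂ - c₃)² + (c₁ - c₃)² = -6` by the Vieta relations.
  have hsq : 3 * (L : ℂ) ^ 2 = 4 * π ^ 2 * (m ^ 2 + m * n + n ^ 2) := by
    linear_combination (-1 / 2 : ℂ) * ((c₁ * L - c₂ * L + 2 * π * I * m) * hm
      + (c₂ * L - c₃ * L + 2 * π * I * n) * hn
      + (c₁ * L - c₃ * L + 2 * π * I * (m + n)) * (hm + hn)
      + 8 * π ^ 2 * (m ^ 2 + m * n + n ^ 2) * I_sq
      - 2 * L ^ 2 * (c₁ + c₂ + c₃) * he₁ + 6 * L ^ 2 * he₂)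
  obtain ⟨k, l, hk, hl, hkl⟩ := exists_pos_nat_sq_add_mul_add_sq_eq hm0 hn0 hmn0
  refine mem_criticalN_of_three_mul_sq_eq hL hk hl ?_
  have hkl' : ((k : ℝ) ^ 2 + k * l + l ^ 2) = m ^ 2 + m * n + n ^ 2 := by exact_mod_cast hkl
  rw [hkl']
  exact_mod_cast hsq

theorem exists_vieta_X_pow_three_add_X_sub_C (lam : ℂ) :
    ∃ c₁ c₂ c₃ : ℂ, c₁ + c₂ + c₃ = 0 ∧ c₁ * c₂ + c₂ * c₃ + c₃ * c₁ = 1 ∧ c₁ * c₂ * c₃ = lam := by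
  have hdeg : (Polynomial.X ^ 3 + Polynomial.X - Polynomial.C lam).degree = 3 := by
    compute_degree!
  obtain ⟨c, hc⟩ := Complex.exists_root (by rw [hdeg]; norm_num)
  obtain ⟨s, hs⟩ := IsAlgClosed.exists_pow_nat_eq (-3 * c ^ 2 - 4) two_pos
  simp only [Polynomial.IsRoot, Polynomial.eval_sub, Polynomial.eval_add, Polynomial.eval_pow,
    Polynomial.eval_X, Polynomial.eval_C] at hc
  refine ⟨c, (-c + s) / 2, (-c - s) / 2, by ring, by linear_combination (-1/4) * hs, ?_⟩
  linear_combination (-c/4) * hs + hc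

theorem ContDiff.differentiable_and_deriv_and_deriv_deriv {𝕜 F : Type*}
    [NontriviallyNormedField 𝕜] [NormedAddCommGroup F] [NormedSpace 𝕜 F] {f : 𝕜 → F}
    (h : ContDiff 𝕜 3 f) :
    Differentiable 𝕜 f ∧ Differentiable 𝕜 (deriv f) ∧ Differentiable 𝕜 (deriv (deriv f)) :=
  ⟨h.differentiable (by norm_num), (h.iterate_deriv' 2 1).differentiable two_ne_zero,
    (h.iterate_deriv' 1 2).differentiable one_ne_zero⟩

section ThirdOrder

variable {a b : ℝ} {φ : ℝ → ℂ}

theorem eqOn_zero_of_deriv_deriv_deriv_eq {c₀ c₁ : ℂ} (hφ : ContDiff ℝ 3 φ)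
    (hode : ∀ x ∈ Icc a b, deriv (deriv (deriv φ)) x = c₀ * φ x + c₁ * deriv φ x)
    (h₀ : φ b = 0) (h₁ : deriv φ b = 0) (h₂ : deriv (deriv φ) b = 0) :
    EqOn φ 0 (Icc a b) := by
  obtain ⟨hd₀, hd₁, hd₂⟩ := hφ.differentiable_and_deriv_and_deriv_deriv
  let fst : ℂ × ℂ × ℂ →L[ℂ] ℂ := .fst ℂ ℂ (ℂ × ℂ)
  let snd : ℂ × ℂ × ℂ →L[ℂ] ℂ := (ContinuousLinearMap.fst ℂ ℂ ℂ).comp (.snd ℂ ℂ (ℂ × ℂ))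
  let thd : ℂ × ℂ × ℂ →L[ℂ] ℂ := (ContinuousLinearMap.snd ℂ ℂ ℂ).comp (.snd ℂ ℂ (ℂ × ℂ))
  let V : ℂ × ℂ × ℂ →L[ℂ] ℂ × ℂ × ℂ := snd.prod (thd.prod (c₀ • fst + c₁ • snd))
  let F : ℝ → ℂ × ℂ × ℂ := fun x ↦ (φ x, deriv φ x, deriv (deriv φ) x)
  have hF : ∀ x ∈ Ioc a b, HasDerivWithinAt F (V (F x)) (Iic x) x := fun x hx ↦ by
    have := (hd₀ x).hasDerivAt.prodMk ((hd₁ x).hasDerivAt.prodMk (hd₂ x).hasDerivAt)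
    simpa [F, V, fst, snd, thd, hode x (Ioc_subset_Icc_self hx)] using this.hasDerivWithinAt
  have hF₀ : EqOn F 0 (Icc a b) :=
    ODE_solution_unique_of_mem_Icc_left (v := fun _ ↦ V) (s := fun _ ↦ univ)
      (fun _ _ ↦ V.lipschitz.lipschitzOnWith)
      (hd₀.continuous.prodMk (hd₁.continuous.prodMk hd₂.continuous)).continuousOn hF
      (fun _ _ ↦ trivial) continuousOn_const
      (fun x _ ↦ by rw [Pi.zero_apply, map_zero]; exact hasDerivWithinAt_const x _ 0)
      (fun _ _ ↦ trivial) (by simp [F, h₀, h₁, h₂])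
  exact fun x hx ↦ congrArg Prod.fst (hF₀ hx)

theorem hasDerivAt_linear_mul_exp (p q c : ℂ) (x : ℝ) :
    HasDerivAt (fun x : ℝ ↦ (p + q * x) * exp (c * x))
      ((q + c * p + c * q * x) * exp (c * x)) x := by
  have hexp : HasDerivAt (fun x : ℝ ↦ exp (c * x)) (exp (c * x) * c) x := by
    simpa using ((hasDerivAt_id (x : ℂ)).const_mul c).cexp.comp_ofReal
  have hlin : HasDerivAt (fun x : ℝ ↦ p + q * x) q x := by
    simpa using ((hasDerivAt_id (x : ℂ)).const_mul q).const_add p |>.comp_ofReal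
  exact hlin.fun_mul hexp |>.congr_deriv (by ring)

theorem deriv_deriv_mul_eq_of_adjoint {lam : ℂ} (hab : a ≤ b) (hφ : ContDiff ℝ 3 φ)
    (hode : ∀ x ∈ Icc a b, lam * φ x + deriv φ x + deriv (deriv (deriv φ)) x = 0)
    {g g₁ g₂ : ℝ → ℂ} (hg : ∀ x, HasDerivAt g (g₁ x) x) (hg₁ : ∀ x, HasDerivAt g₁ (g₂ x) x)
    (hg₂ : ∀ x, HasDerivAt g₂ (lam * g x - g₁ x) x)
    (h₀a : φ a = 0) (h₀b : φ b = 0) (h₁a : deriv φ a = 0) (h₁b : deriv φ b = 0) :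
    deriv (deriv φ) b * g b = deriv (deriv φ) a * g a := by
  obtain ⟨hd₀, hd₁, hd₂⟩ := hφ.differentiable_and_deriv_and_deriv_deriv
  let B : ℝ → ℂ := fun x ↦ deriv (deriv φ) x * g x - deriv φ x * g₁ x + φ x * (g₂ x + g x)
  have hB : ∀ x ∈ Icc a b, HasDerivAt B 0 x := fun x hx ↦ by
    refine (((hd₂ x).hasDerivAt.fun_mul (hg x)).fun_sub
      ((hd₁ x).hasDerivAt.fun_mul (hg₁ x))).fun_add
      ((hd₀ x).hasDerivAt.fun_mul ((hg₂ x).fun_add (hg x))) |>.congr_deriv ?_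
    linear_combination g x * hode x hx
  have := constant_of_has_deriv_right_zero (f := B)
    (fun x hx ↦ (hB x hx).continuousAt.continuousWithinAt)
    (fun x hx ↦ (hB x (Ico_subset_Icc_self hx)).hasDerivWithinAt) b ⟨hab, le_rfl⟩
  simpa [B, h₀a, h₀b, h₁a, h₁b] using this

theorem deriv_deriv_mul_linear_mul_exp_eq {lam : ℂ} (hab : a ≤ b) (hφ : ContDiff ℝ 3 φ)
    (hode : ∀ x ∈ Icc a b, lam * φ x + deriv φ x + deriv (deriv (deriv φ)) x = 0)
    (h₀a : φ a = 0) (h₀b : φ b = 0) (h₁a : deriv φ a = 0) (h₁b : deriv φ b = 0)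
    {p q c : ℂ} (hc : c ^ 3 + c = lam) (hq : (1 + 3 * c ^ 2) * q = 0) :
    deriv (deriv φ) b * ((p + q * b) * exp (c * b)) =
      deriv (deriv φ) a * ((p + q * a) * exp (c * a)) :=
  deriv_deriv_mul_eq_of_adjoint hab hφ hode (hasDerivAt_linear_mul_exp p q c)
    (hasDerivAt_linear_mul_exp _ _ c)
    (fun x ↦ (hasDerivAt_linear_mul_exp _ _ c x).congr_deriv
      (by linear_combination exp (c * x) * (hq + (p + q * x) * hc)))
    h₀a h₀b h₁a h₁b

end ThirdOrder

theorem KdVSpectralODE.eqOn_zero {lam : ℂ} {L : ℝ} {φ : ℝ → ℂ} (hφ : KdVSpectralODE lam L φ)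
    (hL : 0 < L) (hLN : L ∉ criticalN) (h₀ : φ 0 = 0) (h₀L : φ L = 0) (h₁ : deriv φ 0 = 0)
    (h₁L : deriv φ L = 0) :
    EqOn φ 0 (Icc 0 L) := by
  obtain ⟨hφ, hode⟩ := hφ
  simp only [iteratedDeriv_eq_iterate, Function.iterate_succ_apply',
    Function.iterate_zero_apply] at hode
  by_cases hb : deriv (deriv φ) L = 0
  · exact eqOn_zero_of_deriv_deriv_deriv_eq (c₀ := -lam) (c₁ := -1) hφ
      (fun x hx ↦ by linear_combination hode x hx) h₀L h₁L hb
  have hrel : ∀ {p q c : ℂ}, c ^ 3 + c = lam → (1 + 3 * c ^ 2) * q = 0 →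
      deriv (deriv φ) L * ((p + q * L) * exp (c * L)) = deriv (deriv φ) 0 * p := fun hc hq ↦ by
    simpa [h₀] using deriv_deriv_mul_linear_mul_exp_eq hL.le hφ hode h₀ h₀L h₁ h₁L hc hq
  have hsimple : ∀ c : ℂ, c ^ 3 + c = lam → 1 + 3 * c ^ 2 ≠ 0 := fun c hc h ↦ by
    have := hrel (p := 0) (q := 1) hc (by rw [h, zero_mul])
    simp [hb, exp_ne_zero, hL.ne'] at this
  have hexp : ∀ c : ℂ, c ^ 3 + c = lam →
      exp (c * L) = deriv (deriv φ) 0 / deriv (deriv φ) L := fun c hc ↦ by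
    rw [eq_div_iff hb]
    linear_combination hrel (p := 1) (q := 0) hc (mul_zero _)
  obtain ⟨c₁, c₂, c₃, he₁, he₂, he₃⟩ := exists_vieta_X_pow_three_add_X_sub_C lam
  have hc₁ : c₁ ^ 3 + c₁ = lam := by linear_combination c₁ ^ 2 * he₁ - c₁ * he₂ + he₃
  have hc₂ : c₂ ^ 3 + c₂ = lam := by linear_combination c₂ ^ 2 * he₁ - c₂ * he₂ + he₃
  have hc₃ : c₃ ^ 3 + c₃ = lam := by linear_combination c₃ ^ 2 * he₁ - c₃ * he₂ + he₃
  refine absurd (mem_criticalN_of_exp_mul_eq hL ?_ ?_ ?_ he₁ he₂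
    ((hexp _ hc₁).trans (hexp _ hc₂).symm) ((hexp _ hc₂).trans (hexp _ hc₃).symm)) hLN
  -- A repeated root is also a root of the derivative `3 c ^ 2 + 1`.
  · intro h
    exact hsimple c₁ hc₁ (by linear_combination (c₁ - c₃) * h + 2 * c₁ * he₁ - he₂)
  · intro h
    exact hsimple c₂ hc₂ (by linear_combination (c₂ - c₁) * h + 2 * c₂ * he₁ - he₂)
  · intro h
    exact hsimple c₁ hc₁ (by linear_combination (c₁ - c₂) * h + 2 * c₁ * he₁ - he₂)

theorem stmt10 (N : ℕ) (hN : 2 ≤ N) (L : ℝ) (hL : 0 < L) (hLN : L ∉ criticalN)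
    (lam : ℂ) (φ : Fin N → ℝ → ℂ)
    (hode : ∀ j, KdVSpectralODE lam L (φ j))
    (hb0 : ∀ j, φ j 0 = φ ⟨0, by omega⟩ 0)
    (hb2 : ∀ j, φ j L = 0)
    (hb3 : ∀ j, deriv (φ j) 0 = 0)
    (hb4 : ∀ j, deriv (φ j) L = 0) :
    (∀ x ∈ Set.Icc (0 : ℝ) L, (∑ j, φ j x) = 0) ↔
      (∀ j, ∀ x ∈ Set.Icc (0 : ℝ) L, φ j x = 0) := by
  refine ⟨fun hsum j ↦ ?_, fun h x hx ↦ Finset.sum_eq_zero fun j _ ↦ h j x hx⟩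
  have hφ₀ : φ ⟨0, by omega⟩ 0 = 0 := by
    have h := hsum 0 ⟨le_rfl, hL.le⟩
    rw [Finset.sum_congr rfl fun j _ ↦ hb0 j, Finset.sum_const, Finset.card_univ,
      Fintype.card_fin, nsmul_eq_mul] at h
    exact (mul_eq_zero.1 h).resolve_left (Nat.cast_ne_zero.2 (by omega))
  exact (hode j).eqOn_zero hL hLN ((hb0 j).trans hφ₀) (hb2 j) (hb3 j) (hb4 j)
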